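/- arXiv:1307.1804 — 8 statements merged into one kernel-verified Lean document; each statement's English description precedes it below -/
import Mathlib

section
/- Let k be a commutative ring, A a k-algebra, M an (A,k)-dimodule, and K a commutative associative unital k-algebra. If K is a flat k-module and A is finitely presented as a k-module, then the canonical K-linear map ω : Hom_k(A,M) ⊗_k K → Hom_K(A⊗_k K, M⊗_k K), determined by ω(f ⊗ x)(a ⊗ y) = f(a) ⊗ xy, restricts to an isomorphism of K-modules Der_k(A,M) ⊗_k K ≅ Der_K(A⊗_k K, M⊗_k K). -/
/-!
Since `A` is finitely presented and `K` is flat, `ω` is an isomorphism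
(`Module.FinitePresentation.isBaseChange_map`). Derivations form the kernel of the defect map
`f ↦ ((a, b) ↦ f (a b) - f a · b - a · f b)` into `Hom_k(A, Hom_k(A, M))`, and flat base change
preserves kernels. It remains to check that, under `ω` and the analogous isomorphism for
`Hom_k(A, Hom_k(A, M))`, the base change of the defect map is the defect map of `A_K`.
-/

open TensorProduct

def derSubmodule {k A M : Type*} [CommRing k]
    [AddCommGroup A] [Module k A] [AddCommGroup M] [Module k M]
    (mul : A →ₗ[k] A →ₗ[k] A)
    (lact : A →ₗ[k] M →ₗ[k] M) (ract : M →ₗ[k] A →ₗ[k] M) :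
    Submodule k (A →ₗ[k] M) where
  carrier := {f | ∀ a b : A, f (mul a b) = ract (f a) b + lact a (f b)}
  add_mem' := by
    intro f g hf hg a b
    simp only [LinearMap.add_apply, hf a b, hg a b, map_add, LinearMap.add_apply]
    abel
  zero_mem' := by intro a b; simp
  smul_mem' := by
    intro c f hf a b
    simp only [LinearMap.smul_apply, hf a b, map_smul, smul_add, LinearMap.smul_apply]

section Defect

variable {R A M : Type*} [CommRing R] [AddCommGroup A] [Module R A] [AddCommGroup M] [Module R M]
  (mul : A →ₗ[R] A →ₗ[R] A) (lact : A →ₗ[R] M →ₗ[R] M) (ract : M →ₗ[R] A →ₗ[R] M)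

def derDefect : (A →ₗ[R] M) →ₗ[R] A →ₗ[R] A →ₗ[R] M where
  toFun f := mul.compr₂ f - ract ∘ₗ f - lact.compl₂ f
  map_add' f g := by
    ext
    simp only [LinearMap.sub_apply, LinearMap.add_apply, LinearMap.compr₂_apply,
      LinearMap.comp_apply, LinearMap.compl₂_apply, map_add]
    abel
  map_smul' c f := by ext; simp [smul_sub]

lemma derDefect_apply (f : A →ₗ[R] M) (a b : A) :
    derDefect mul lact ract f a b = f (mul a b) - ract (f a) b - lact a (f b) :=
  rfl

lemma ker_derDefect : LinearMap.ker (derDefect mul lact ract) = derSubmodule mul lact ract := by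
  ext f
  simp only [LinearMap.mem_ker, derSubmodule, Submodule.mem_mk, AddSubmonoid.mem_mk,
    AddSubsemigroup.mem_mk, Set.mem_ofPred_eq, LinearMap.ext_iff, derDefect_apply,
    LinearMap.zero_apply, sub_sub, sub_eq_zero]

end Defect

section BaseChange

variable {k A N K : Type*} [CommRing k] [AddCommGroup A] [Module k A] [AddCommGroup N] [Module k N]
  [CommRing K] [Algebra k K]

lemma Module.FinitePresentation.isBaseChange_map_equiv_tmul_tmul [Module.Flat k K]
    [Module.FinitePresentation k A] (x y : K) (f : A →ₗ[k] N) (a : A) :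
    (isBaseChange_map k A N K).equiv (x ⊗ₜ f) (y ⊗ₜ a) = (x * y) ⊗ₜ f a := by
  rw [IsBaseChange.equiv_tmul, LinearMap.smul_apply, LinearMap.baseChangeHom_apply,
    LinearMap.baseChange_tmul, smul_tmul', smul_eq_mul]

lemma Module.FinitePresentation.bijective_of_apply_tmul_tmul [Module.Flat k K]
    [Module.FinitePresentation k A]
    {ω : K ⊗[k] (A →ₗ[k] N) →ₗ[K] (K ⊗[k] A →ₗ[K] K ⊗[k] N)}
    (hω : ∀ (x y : K) (f : A →ₗ[k] N) (a : A), ω (x ⊗ₜ f) (y ⊗ₜ a) = (x * y) ⊗ₜ f a) :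
    Function.Bijective ω := by
  have h := Module.FinitePresentation.isBaseChange_map k A N K
  have : ω = h.equiv.toLinearMap := by
    refine AlgebraTensorModule.ext fun x f => AlgebraTensorModule.ext fun y a => ?_
    rw [hω]
    exact (Module.FinitePresentation.isBaseChange_map_equiv_tmul_tmul x y f a).symm
  exact this ▸ h.equiv.bijective

end BaseChange

section Compat

variable {k A M K : Type*} [CommRing k] [AddCommGroup A] [Module k A] [AddCommGroup M] [Module k M]
  [CommRing K] [Algebra k K]
  {mul : A →ₗ[k] A →ₗ[k] A} {lact : A →ₗ[k] M →ₗ[k] M} {ract : M →ₗ[k] A →ₗ[k] M}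
  {mulK : (K ⊗[k] A) →ₗ[K] (K ⊗[k] A) →ₗ[K] (K ⊗[k] A)}
  {lactK : (K ⊗[k] A) →ₗ[K] (K ⊗[k] M) →ₗ[K] (K ⊗[k] M)}
  {ractK : (K ⊗[k] M) →ₗ[K] (K ⊗[k] A) →ₗ[K] (K ⊗[k] M)}
  {ω : (K ⊗[k] (A →ₗ[k] M)) →ₗ[K] ((K ⊗[k] A) →ₗ[K] (K ⊗[k] M))}

lemma derDefect_baseChange
    (hmulK : ∀ (x y : K) (a b : A), mulK (x ⊗ₜ a) (y ⊗ₜ b) = (x * y) ⊗ₜ (mul a b))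
    (hlactK : ∀ (x y : K) (a : A) (m : M), lactK (x ⊗ₜ a) (y ⊗ₜ m) = (x * y) ⊗ₜ (lact a m))
    (hractK : ∀ (x y : K) (m : M) (a : A), ractK (x ⊗ₜ m) (y ⊗ₜ a) = (x * y) ⊗ₜ (ract m a))
    (hω : ∀ (x y : K) (f : A →ₗ[k] M) (a : A), ω (x ⊗ₜ f) (y ⊗ₜ a) = (x * y) ⊗ₜ f a)
    {Φ : K ⊗[k] (A →ₗ[k] A →ₗ[k] M) →ₗ[K] (K ⊗[k] A →ₗ[K] K ⊗[k] (A →ₗ[k] M))}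
    (hΦ : ∀ (x y : K) (F : A →ₗ[k] A →ₗ[k] M) (a : A), Φ (x ⊗ₜ F) (y ⊗ₜ a) = (x * y) ⊗ₜ F a)
    (t : K ⊗[k] (A →ₗ[k] M)) :
    derDefect mulK lactK ractK (ω t) = ω ∘ₗ Φ ((derDefect mul lact ract).baseChange K t) := by
  induction t using TensorProduct.induction_on with
  | zero => simp
  | add t₁ t₂ h₁ h₂ => simp only [map_add, h₁, h₂, LinearMap.comp_add]
  | tmul x f =>
    refine AlgebraTensorModule.ext fun y a => AlgebraTensorModule.ext fun z b => ?_
    simp only [derDefect_apply, LinearMap.comp_apply, LinearMap.baseChange_tmul, hΦ, hω, hmulK,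
      hlactK, hractK, tmul_sub]
    ring_nf

lemma mem_derSubmodule_iff_baseChange_derDefect_eq_zero [Module.Flat k K]
    [Module.FinitePresentation k A]
    (hmulK : ∀ (x y : K) (a b : A), mulK (x ⊗ₜ a) (y ⊗ₜ b) = (x * y) ⊗ₜ (mul a b))
    (hlactK : ∀ (x y : K) (a : A) (m : M), lactK (x ⊗ₜ a) (y ⊗ₜ m) = (x * y) ⊗ₜ (lact a m))
    (hractK : ∀ (x y : K) (m : M) (a : A), ractK (x ⊗ₜ m) (y ⊗ₜ a) = (x * y) ⊗ₜ (ract m a))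
    (hω : ∀ (x y : K) (f : A →ₗ[k] M) (a : A), ω (x ⊗ₜ f) (y ⊗ₜ a) = (x * y) ⊗ₜ f a)
    (t : K ⊗[k] (A →ₗ[k] M)) :
    ω t ∈ derSubmodule mulK lactK ractK ↔ (derDefect mul lact ract).baseChange K t = 0 := by
  let Φ := (Module.FinitePresentation.isBaseChange_map k A (A →ₗ[k] M) K).equiv
  rw [← ker_derDefect, LinearMap.mem_ker, derDefect_baseChange hmulK hlactK hractK hω
    (Φ := Φ.toLinearMap) Module.FinitePresentation.isBaseChange_map_equiv_tmul_tmul,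
    ← LinearMap.comp_zero (M := K ⊗[k] A) (σ₁₂ := RingHom.id K) ω,
    LinearMap.cancel_left (Module.FinitePresentation.bijective_of_apply_tmul_tmul hω).1,
    LinearEquiv.coe_coe, LinearEquiv.map_eq_zero_iff]

end Compat

/-- If `K` is a flat `k`-module and `A` is finitely presented as a
`k`-module, the canonical `K`-linear map `ω : Hom_k(A,M) ⊗_k K → Hom_K(A_K, M_K)`
restricts to an isomorphism of `K`-modules `Der_k(A,M) ⊗_k K ≅ Der_K(A_K, M_K)`;
formalized: the composite `K`-linear map
`K ⊗[k] Der_k(A,M) → K ⊗[k] Hom_k(A,M) → Hom_K(A_K, M_K)` is injective and its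
range is exactly the set of `K`-linear derivations of `A_K` with values in `M_K`. -/
theorem stmt_1 {k A M K : Type*} [CommRing k]
    [AddCommGroup A] [Module k A] [AddCommGroup M] [Module k M]
    [CommRing K] [Algebra k K]
    [Module.Flat k K] [Module.FinitePresentation k A]
    (mul : A →ₗ[k] A →ₗ[k] A)
    (lact : A →ₗ[k] M →ₗ[k] M) (ract : M →ₗ[k] A →ₗ[k] M)
    (mulK : (K ⊗[k] A) →ₗ[K] (K ⊗[k] A) →ₗ[K] (K ⊗[k] A))
    (hmulK : ∀ (x y : K) (a b : A),
      mulK (x ⊗ₜ a) (y ⊗ₜ b) = (x * y) ⊗ₜ (mul a b))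
    (lactK : (K ⊗[k] A) →ₗ[K] (K ⊗[k] M) →ₗ[K] (K ⊗[k] M))
    (hlactK : ∀ (x y : K) (a : A) (m : M),
      lactK (x ⊗ₜ a) (y ⊗ₜ m) = (x * y) ⊗ₜ (lact a m))
    (ractK : (K ⊗[k] M) →ₗ[K] (K ⊗[k] A) →ₗ[K] (K ⊗[k] M))
    (hractK : ∀ (x y : K) (m : M) (a : A),
      ractK (x ⊗ₜ m) (y ⊗ₜ a) = (x * y) ⊗ₜ (ract m a))
    (ω : (K ⊗[k] (A →ₗ[k] M)) →ₗ[K] ((K ⊗[k] A) →ₗ[K] (K ⊗[k] M)))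
    (hω : ∀ (x y : K) (f : A →ₗ[k] M) (a : A),
      ω (x ⊗ₜ f) (y ⊗ₜ a) = (x * y) ⊗ₜ f a) :
    Function.Injective
      (ω ∘ₗ ((derSubmodule mul lact ract).subtype.baseChange K)) ∧
    Set.range
      ⇑(ω ∘ₗ ((derSubmodule mul lact ract).subtype.baseChange K)) =
      {g : (K ⊗[k] A) →ₗ[K] (K ⊗[k] M) |
        ∀ u v : K ⊗[k] A, g (mulK u v) = ractK (g u) v + lactK u (g v)} := by
  have hω_bij := Module.FinitePresentation.bijective_of_apply_tmul_tmul hω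
  have hι_inj : Function.Injective ((derSubmodule mul lact ract).subtype.baseChange K) :=
    Module.Flat.lTensor_preserves_injective_linearMap _ (Submodule.injective_subtype _)
  have hι_range : LinearMap.range ((derSubmodule mul lact ract).subtype.baseChange K) =
      LinearMap.ker ((derDefect mul lact ract).baseChange K) := by
    rw [← ker_derDefect]
    exact (Module.Flat.ker_lTensor_eq K K _).symm
  refine ⟨hω_bij.1.comp hι_inj, Set.ext fun g => ?_⟩
  obtain ⟨t, rfl⟩ := hω_bij.2 g
  calc ω t ∈ Set.range ⇑(ω ∘ₗ (derSubmodule mul lact ract).subtype.baseChange K)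
      ↔ t ∈ LinearMap.range ((derSubmodule mul lact ract).subtype.baseChange K) := by
        simp [hω_bij.1.eq_iff]
    _ ↔ ω t ∈ derSubmodule mulK lactK ractK := by
        rw [hι_range, LinearMap.mem_ker,
          mem_derSubmodule_iff_baseChange_derDefect_eq_zero hmulK hlactK hractK hω]
end

section
/- Let k be a commutative ring, L a Lie algebra over k which is finitely presented as a k-module, M an L-module, and K a commutative associative unital k-algebra which is faithfully flat as a k-module. Then IDer_k(L,M) = Der_k(L,M) if and only if IDer_K(L⊗_k K, M⊗_k K) = Der_K(L⊗_k K, M⊗_k K). -/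
/-!
Every derivation is inner exactly when the Chevalley–Eilenberg complex
`M → Hom(L, M) → Hom(L, Hom(L, M))` is exact in the middle. Because `L` is finitely presented
and `K` is flat, `K ⊗ Hom_k(L, N) ≅ Hom_K(K ⊗ L, K ⊗ N)`, so base change of this complex is the
corresponding complex of `K ⊗ L` with coefficients in `K ⊗ M`; faithful flatness then says that
exactness holds before base change if and only if it holds after.
-/

open TensorProduct

section BaseChangeHom

variable {R : Type*} (A P N : Type*) [CommRing R] [CommRing A] [Algebra R A] [Module.Flat R A]
  [AddCommGroup P] [Module R P] [Module.FinitePresentation R P] [AddCommGroup N] [Module R N]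

noncomputable def Module.FinitePresentation.baseChangeHomEquiv :
    A ⊗[R] (P →ₗ[R] N) ≃ₗ[A] (A ⊗[R] P →ₗ[A] A ⊗[R] N) :=
  (Module.FinitePresentation.isBaseChange_map R P N A).equiv

variable {A P N}

lemma Module.FinitePresentation.baseChangeHomEquiv_tmul_tmul (a b : A) (f : P →ₗ[R] N) (x : P) :
    baseChangeHomEquiv A P N (a ⊗ₜ f) (b ⊗ₜ x) = (a * b) ⊗ₜ f x := by
  simp [baseChangeHomEquiv, smul_tmul']

end BaseChangeHom

namespace LieModule.Cohomology

variable (R L M : Type*) [CommRing R] [LieRing L] [LieAlgebra R L]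
  [AddCommGroup M] [Module R M] [LieRingModule L M] [LieModule R L M]

def d₀₁ : M →ₗ[R] oneCochain R L M :=
  (toEnd R L M : L →ₗ[R] Module.End R M).flip

variable {R L M}

@[simp] lemma d₀₁_apply (m : M) (x : L) : d₀₁ R L M m x = ⁅x, m⁆ := rfl

lemma d₁₂_comp_d₀₁ : d₁₂ R L M ∘ₗ d₀₁ R L M = 0 := by
  ext m x y
  simp [lie_lie]

lemma d₁₂_eq_zero_iff (f : oneCochain R L M) :
    d₁₂ R L M f = 0 ↔ ∀ x y, f ⁅x, y⁆ = ⁅x, f y⁆ - ⁅y, f x⁆ := by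
  simp only [Subtype.ext_iff, LinearMap.ext_iff, d₁₂_apply_coe_apply_apply, ZeroMemClass.coe_zero,
    LinearMap.zero_apply, sub_eq_zero]
  exact forall₂_congr fun _ _ => eq_comm

lemma forall_derivation_inner_iff_exact :
    (∀ d : L →ₗ[R] M, (∀ x y : L, d ⁅x, y⁆ = ⁅x, d y⁆ - ⁅y, d x⁆) →
        ∃ m : M, ∀ l : L, d l = ⁅l, m⁆) ↔
      Function.Exact (d₀₁ R L M) (d₁₂ R L M) := by
  refine ⟨fun h d => ⟨fun hd => ?_, ?_⟩, fun h d hd => ?_⟩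
  · obtain ⟨m, hm⟩ := h d ((d₁₂_eq_zero_iff d).mp hd)
    exact ⟨m, LinearMap.ext fun l => (hm l).symm⟩
  · rintro ⟨m, rfl⟩
    exact LinearMap.congr_fun d₁₂_comp_d₀₁ m
  · obtain ⟨m, rfl⟩ := (h d).mp ((d₁₂_eq_zero_iff d).mpr hd)
    exact ⟨m, fun _ => rfl⟩

section BaseChange

open Module.FinitePresentation

variable (A : Type*) [CommRing A] [Algebra R A] [Module.Flat R A] [Module.FinitePresentation R L]

lemma baseChangeHomEquiv_comp_d₀₁ :
    (baseChangeHomEquiv A L M).toLinearMap ∘ₗ (d₀₁ R L M).baseChange A =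
      d₀₁ A (A ⊗[R] L) (A ⊗[R] M) := by
  ext m b
  simp [baseChangeHomEquiv_tmul_tmul]

lemma d₁₂_comp_baseChangeHomEquiv :
    (twoCochain A (A ⊗[R] L) (A ⊗[R] M)).subtype ∘ₗ d₁₂ A (A ⊗[R] L) (A ⊗[R] M) ∘ₗ
        (baseChangeHomEquiv A L M).toLinearMap =
      ((baseChangeHomEquiv A L (L →ₗ[R] M)).trans
        (baseChangeHomEquiv A L M).congrRight).toLinearMap ∘ₗ
          ((twoCochain R L M).subtype ∘ₗ d₁₂ R L M).baseChange A := by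
  ext f b x
  simp [LinearEquiv.congrRight, baseChangeHomEquiv_tmul_tmul, tmul_sub]

end BaseChange

theorem exact_d₀₁_d₁₂_baseChange_iff (A : Type*) [CommRing A] [Algebra R A]
    [Module.FaithfullyFlat R A] [Module.FinitePresentation R L] :
    Function.Exact (d₀₁ A (A ⊗[R] L) (A ⊗[R] M)) (d₁₂ A (A ⊗[R] L) (A ⊗[R] M)) ↔
      Function.Exact (d₀₁ R L M) (d₁₂ R L M) := by
  rw [← (twoCochain A _ _).injective_subtype.comp_exact_iff_exact,
    ← (twoCochain R L M).injective_subtype.comp_exact_iff_exact,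
    Function.Exact.iff_of_ladder_linearEquiv (e₁ := LinearEquiv.refl A _)
      (by rw [LinearEquiv.refl_toLinearMap, LinearMap.comp_id, baseChangeHomEquiv_comp_d₀₁])
      (d₁₂_comp_baseChangeHomEquiv A)]
  exact Module.FaithfullyFlat.lTensor_exact_iff_exact R A _ _

end LieModule.Cohomology

open LieModule.Cohomology

/-- Let `L` be a Lie algebra over `k` which is finitely presented
as a `k`-module, `M` an `L`-module, and `K` a commutative `k`-algebra which is
faithfully flat as a `k`-module.  Then every `k`-linear derivation `L → M` is inner
if and only if every `K`-linear derivation `L ⊗[k] K → M ⊗[k] K` is inner.  Here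
`K ⊗[k] L` and `K ⊗[k] M` carry the base-changed Lie algebra and Lie module
structures, with `⁅x ⊗ l, y ⊗ m⁆ = (x*y) ⊗ ⁅l,m⁆`. -/
theorem stmt_4 {k L M K : Type*} [CommRing k] [LieRing L] [LieAlgebra k L]
    [AddCommGroup M] [Module k M] [LieRingModule L M] [LieModule k L M]
    [CommRing K] [Algebra k K]
    [Module.FinitePresentation k L] [Module.FaithfullyFlat k K] :
    (∀ d : L →ₗ[k] M, (∀ x y : L, d ⁅x, y⁆ = ⁅x, d y⁆ - ⁅y, d x⁆) →
        ∃ m : M, ∀ l : L, d l = ⁅l, m⁆) ↔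
      (∀ D : (K ⊗[k] L) →ₗ[K] (K ⊗[k] M),
        (∀ u v : K ⊗[k] L, D ⁅u, v⁆ = ⁅u, D v⁆ - ⁅v, D u⁆) →
          ∃ n : K ⊗[k] M, ∀ u : K ⊗[k] L, D u = ⁅u, n⁆) := by
  rw [forall_derivation_inner_iff_exact, forall_derivation_inner_iff_exact,
    exact_d₀₁_d₁₂_baseChange_iff]
end

section
/- Let R be a commutative ring, B an R-algebra, and S a faithfully flat commutative R-algebra. Then B is perfect if and only if B ⊗_R S is perfect as an S-algebra. -/
/-! The span of the products in `S ⊗[R] B` is the base change of the span of the products in `B`,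
and base change of submodules along a faithfully flat algebra is injective. -/

open TensorProduct

namespace Submodule

variable {R S M N P : Type*} [CommSemiring R] [CommSemiring S] [Algebra R S]
  [AddCommMonoid M] [Module R M] [AddCommMonoid N] [Module R N] [AddCommMonoid P] [Module R P]

theorem baseChange_span_apply₂ (f : M →ₗ[R] N →ₗ[R] P)
    (fS : (S ⊗[R] M) →ₗ[S] (S ⊗[R] N) →ₗ[S] (S ⊗[R] P))
    (hfS : ∀ (s₁ s₂ : S) (m : M) (n : N), fS (s₁ ⊗ₜ m) (s₂ ⊗ₜ n) = (s₁ * s₂) ⊗ₜ f m n) :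
    (span R {x : P | ∃ m n, x = f m n}).baseChange S =
      span S {y : S ⊗[R] P | ∃ u v, y = fS u v} := by
  apply le_antisymm
  · rw [baseChange_span, span_le]
    rintro - ⟨-, ⟨m, n, rfl⟩, rfl⟩
    exact subset_span ⟨1 ⊗ₜ m, 1 ⊗ₜ n, by rw [hfS, one_mul]; rfl⟩
  · rw [span_le]
    rintro - ⟨u, v, rfl⟩
    induction u using TensorProduct.induction_on with
    | zero => simp
    | add u₁ u₂ h₁ h₂ => rw [map_add, LinearMap.add_apply]; exact add_mem h₁ h₂
    | tmul s m =>
      induction v using TensorProduct.induction_on with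
      | zero => simp
      | add v₁ v₂ h₁ h₂ => rw [map_add]; exact add_mem h₁ h₂
      | tmul t n => rw [hfS]; exact tmul_mem_baseChange_of_mem _ (subset_span ⟨m, n, rfl⟩)

end Submodule

/-- Let `R` be a commutative ring, `B` an `R`-algebra
(an `R`-module with an `R`-bilinear multiplication `mulB`, no further identities),
and `S` a faithfully flat commutative `R`-algebra.  Then `B` is perfect
(equal to its derived algebra, the span of all products) if and only if
`B ⊗_R S` is perfect as an `S`-algebra, where the multiplication of `S ⊗[R] B`
is the unique `S`-bilinear map with `(s₁ ⊗ b₁)(s₂ ⊗ b₂) = (s₁s₂) ⊗ (b₁b₂)`. -/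
theorem stmt_5 {R B S : Type*} [CommRing R]
    [AddCommGroup B] [Module R B]
    [CommRing S] [Algebra R S] [Module.FaithfullyFlat R S]
    (mulB : B →ₗ[R] B →ₗ[R] B)
    (mulBS : (S ⊗[R] B) →ₗ[S] (S ⊗[R] B) →ₗ[S] (S ⊗[R] B))
    (hmulBS : ∀ (s₁ s₂ : S) (b₁ b₂ : B),
      mulBS (s₁ ⊗ₜ b₁) (s₂ ⊗ₜ b₂) = (s₁ * s₂) ⊗ₜ (mulB b₁ b₂)) :
    Submodule.span R {x : B | ∃ b₁ b₂ : B, x = mulB b₁ b₂} = ⊤ ↔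
      Submodule.span S {y : S ⊗[R] B | ∃ u v : S ⊗[R] B, y = mulBS u v} = ⊤ := by
  rw [← Submodule.baseChange_span_apply₂ mulB mulBS hmulBS, ← Submodule.baseChange_top (A := S),
    Submodule.baseChange_inj]
end

section
/- Let k be a commutative ring, R a commutative k-algebra, A a perfect R-algebra, and M an (A,k)-dimodule which also carries an R-module structure satisfying r(a·m) = (ra)·m for all r ∈ R, a ∈ A, m ∈ M. Then every k-linear centroidal transformation is R-linear: Cent_k(A,M) = Cent_R(A,M), i.e., every χ ∈ Cent_k(A,M) satisfies χ(ra) = r·χ(a) for all r ∈ R, a ∈ A. -/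
/-!
The elements `a` with `χ (r • a) = r • χ a` for all `r` form an `R`-submodule. It contains
every product, because `χ (r • a₁a₂) = χ ((r • a₁) a₂) = (r • a₁) · χ a₂ = r • (a₁ · χ a₂)`;
perfectness then makes it everything.
-/

namespace AddMonoidHom

variable {A M : Type*} (R : Type*) [AddCommMonoid A] [AddCommMonoid M]

section Semiring

variable [Semiring R] [Module R A] [Module R M]

def smulCommSubmodule (χ : A →+ M) : Submodule R A where
  carrier := {a | ∀ r : R, χ (r • a) = r • χ a}
  zero_mem' := by simp
  add_mem' ha hb r := by rw [smul_add, map_add, map_add, ha r, hb r, smul_add]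
  smul_mem' s a ha r := by rw [smul_smul, ha, ha, mul_smul]

variable {R} in
theorem mem_smulCommSubmodule {χ : A →+ M} {a : A} :
    a ∈ χ.smulCommSubmodule R ↔ ∀ r : R, χ (r • a) = r • χ a :=
  Iff.rfl

end Semiring

variable {R} [CommSemiring R] [Module R A] [Module R M]

theorem mul_mem_smulCommSubmodule (χ : A →+ M) (mul : A →ₗ[R] A →ₗ[R] A) (act : A → M → M)
    (hact : ∀ (r : R) (a : A) (m : M), act (r • a) m = r • act a m)
    (hχ : ∀ a b : A, χ (mul a b) = act a (χ b)) (a b : A) :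
    mul a b ∈ χ.smulCommSubmodule R := fun r => by
  rw [← LinearMap.map_smul₂, hχ, hχ, hact]

end AddMonoidHom

theorem stmt_6_general {k R A M : Type*} [CommRing k] [CommRing R]
    [AddCommGroup A] [Module k A] [Module R A]
    [AddCommGroup M] [Module k M] [Module R M]
    (mul : A →ₗ[R] A →ₗ[R] A)
    (lact : A →ₗ[k] M →ₗ[k] M) (ract : M →ₗ[k] A →ₗ[k] M)
    (hcompat : ∀ (r : R) (a : A) (m : M), lact (r • a) m = r • lact a m)
    (hperf : Submodule.span R {x : A | ∃ a b : A, x = mul a b} = ⊤) :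
    ∀ χ : A →ₗ[k] M,
      (∀ a₁ a₂ : A, χ (mul a₁ a₂) = ract (χ a₁) a₂ ∧
        χ (mul a₁ a₂) = lact a₁ (χ a₂)) →
      ∀ (r : R) (a : A), χ (r • a) = r • χ a := by
  intro χ hχ r a
  have hprod : {x : A | ∃ a b : A, x = mul a b} ⊆ χ.toAddMonoidHom.smulCommSubmodule R := by
    rintro _ ⟨a₁, a₂, rfl⟩
    exact χ.toAddMonoidHom.mul_mem_smulCommSubmodule mul (fun a m => lact a m) hcompat
      (fun a₁ a₂ => (hχ a₁ a₂).2) a₁ a₂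
  have htop := hperf ▸ Submodule.span_le.2 hprod
  exact AddMonoidHom.mem_smulCommSubmodule.1 (htop Submodule.mem_top) r

/-- Let `R` be a commutative `k`-algebra, `A` a perfect `R`-algebra
(an `R`-module with `R`-bilinear multiplication `mul`, spanned over `R` by products),
and `M` an `(A,k)`-dimodule (with `k`-bilinear left action `lact` and right action
`ract`) carrying an `R`-module structure such that `r • (a · m) = (r • a) · m`.
Then every `k`-linear centroidal transformation `χ : A → M` is `R`-linear:
`Cent_k(A,M) = Cent_R(A,M)`. -/
theorem stmt_6 {k R A M : Type*} [CommRing k] [CommRing R] [Algebra k R]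
    [AddCommGroup A] [Module k A] [Module R A] [IsScalarTower k R A]
    [AddCommGroup M] [Module k M] [Module R M] [IsScalarTower k R M]
    (mul : A →ₗ[R] A →ₗ[R] A)
    (lact : A →ₗ[k] M →ₗ[k] M) (ract : M →ₗ[k] A →ₗ[k] M)
    (hcompat : ∀ (r : R) (a : A) (m : M), lact (r • a) m = r • lact a m)
    (hperf : Submodule.span R {x : A | ∃ a b : A, x = mul a b} = ⊤) :
    ∀ χ : A →ₗ[k] M,
      (∀ a₁ a₂ : A, χ (mul a₁ a₂) = ract (χ a₁) a₂ ∧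
        χ (mul a₁ a₂) = lact a₁ (χ a₂)) →
      ∀ (r : R) (a : A), χ (r • a) = r • χ a :=
  stmt_6_general mul lact ract hcompat hperf
end

section
/- Let k be a commutative ring, A a central k-algebra which is finitely presented as a k-module, R a flat commutative k-algebra, S a faithfully flat commutative R-algebra, and B an R-algebra such that B ⊗_R S is isomorphic as an S-algebra to A ⊗_k S. Then B is finitely presented as an R-module, and the canonical ring homomorphism χ : R → Cent_R(B), sending r to the map b ↦ rb, is an isomorphism; in particular B is a central R-algebra. -/
/-!
Centrality of `(M, mul)` over `R` is exactness of `0 → R → End_R M → Hom(M, Hom(M, M × M))`,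
the last map sending `χ` to its defects `(χ(ab) - χ(a)b, χ(ab) - aχ(b))`. For finitely presented
`M` and flat `S`, `S ⊗ Hom_R(M, N) ≅ Hom_S(S ⊗ M, S ⊗ N)`, so flat base change carries this sequence
to the one of `S ⊗ M`. Conversely, if `S` is faithfully flat and the base change of `χ` is a scalar,
then `χ ∈ R ∙ id`, because `Submodule.baseChange` reflects inclusions. Centrality therefore goes up
from `A` to `S ⊗ A ≅ S ⊗ B` and comes back down to `B`. Finite presentation of `B` descends along
`S` as well, since finite generation does and kernels commute with flat base change.
-/

open TensorProduct LinearMap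

section FinitePresentationDescent

variable {R M : Type*} (S : Type*) [CommRing R] [CommRing S] [Algebra R S]
  [AddCommGroup M] [Module R M]

lemma Module.FinitePresentation.of_finitePresentation_tensorProduct_of_faithfullyFlat
    [Module.FaithfullyFlat R S] [Module.FinitePresentation S (S ⊗[R] M)] :
    Module.FinitePresentation R M := by
  have : Module.Finite R M := .of_finite_tensorProduct_of_faithfullyFlat S
  obtain ⟨n, p, hp⟩ := Module.Finite.exists_fin' R M
  have : Module.FinitePresentation S (S ⊗[R] (Fin n → R)) :=
    Module.finitePresentation_of_projective S _
  have hker := Module.FinitePresentation.fg_ker (AlgebraTensorModule.lTensor S S p)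
    (LinearMap.lTensor_surjective S hp)
  rw [Module.Flat.ker_lTensor_eq] at hker
  have : Module.Finite S (S ⊗[R] ker p) :=
    have : Module.Finite S (range (AlgebraTensorModule.lTensor S S (ker p).subtype)) :=
      Module.Finite.iff_fg.mpr hker
    .equiv (LinearEquiv.ofInjective (AlgebraTensorModule.lTensor S S (ker p).subtype)
      (Module.Flat.lTensor_preserves_injective_linearMap _ (ker p).injective_subtype)).symm
  have : Module.Finite R (ker p) := .of_finite_tensorProduct_of_faithfullyFlat S
  exact Module.finitePresentation_of_surjective p hp (Module.Finite.iff_fg.mp this)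

end FinitePresentationDescent

section Centroid

variable {R M : Type*} [CommRing R] [AddCommGroup M] [Module R M]

def IsCentroidal (mul : M →ₗ[R] M →ₗ[R] M) (χ : Module.End R M) : Prop :=
  ∀ a b, χ (mul a b) = mul (χ a) b ∧ χ (mul a b) = mul a (χ b)

def IsCentral (mul : M →ₗ[R] M →ₗ[R] M) : Prop :=
  Function.Injective (fun r : R => (r • LinearMap.id : Module.End R M)) ∧
    ∀ χ, IsCentroidal mul χ → ∃ r : R, χ = r • LinearMap.id

def centroidDefect (mul : M →ₗ[R] M →ₗ[R] M) :
    Module.End R M →ₗ[R] M →ₗ[R] M →ₗ[R] M × M where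
  toFun χ := LinearMap.mk₂ R (fun a b => (χ (mul a b) - mul (χ a) b, χ (mul a b) - mul a (χ b)))
    (fun _ _ _ => by ext <;> simp <;> abel) (fun _ _ _ => by ext <;> simp [smul_sub])
    (fun _ _ _ => by ext <;> simp <;> abel) (fun _ _ _ => by ext <;> simp [smul_sub])
  map_add' _ _ := by ext <;> simp <;> abel
  map_smul' _ _ := by ext <;> simp [smul_sub]

@[simp]
lemma centroidDefect_apply (mul : M →ₗ[R] M →ₗ[R] M) (χ : Module.End R M) (a b : M) :
    centroidDefect mul χ a b = (χ (mul a b) - mul (χ a) b, χ (mul a b) - mul a (χ b)) :=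
  rfl

variable {mul : M →ₗ[R] M →ₗ[R] M}

lemma centroidDefect_eq_zero_iff {χ : Module.End R M} :
    centroidDefect mul χ = 0 ↔ IsCentroidal mul χ := by
  simp [LinearMap.ext_iff, IsCentroidal, sub_eq_zero]

lemma isCentroidal_iff {χ : Module.End R M} :
    IsCentroidal mul χ ↔ mul.compr₂ χ = mul ∘ₗ χ ∧ mul.compr₂ χ = mul.compl₂ χ := by
  simp [LinearMap.ext_iff, IsCentroidal, forall_and]

lemma isCentroidal_smul_id (r : R) : IsCentroidal mul (r • LinearMap.id) := by
  simp [IsCentroidal]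

lemma IsCentral.exact (h : IsCentral mul) :
    Function.Exact (toSpanSingleton R (Module.End R M) LinearMap.id) (centroidDefect mul) := by
  intro χ
  rw [centroidDefect_eq_zero_iff]
  refine ⟨fun hχ => ?_, ?_⟩
  · obtain ⟨r, rfl⟩ := h.2 χ hχ
    exact ⟨r, rfl⟩
  · rintro ⟨r, rfl⟩
    exact isCentroidal_smul_id r

lemma IsCentroidal.baseChange (S : Type*) [CommRing S] [Algebra R S] {χ : Module.End R M}
    (hχ : IsCentroidal mul χ) :
    IsCentroidal (BilinMap.baseChange S mul) (χ.baseChange S) := by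
  rw [isCentroidal_iff]
  constructor <;> ext a b
  exacts [by simp [(hχ a b).1], by simp [(hχ a b).2]]

lemma IsCentroidal.conj {N : Type*} [AddCommGroup N] [Module R N] {mulN : N →ₗ[R] N →ₗ[R] N}
    (e : M ≃ₗ[R] N) (he : ∀ u v, e (mul u v) = mulN (e u) (e v)) {χ : Module.End R M}
    (hχ : IsCentroidal mul χ) : IsCentroidal mulN (e.conj χ) := by
  intro u v
  obtain ⟨a, rfl⟩ := e.surjective u
  obtain ⟨b, rfl⟩ := e.surjective v
  exact ⟨by simp [LinearEquiv.conj_apply, ← he, (hχ a b).1],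
    by simp [LinearEquiv.conj_apply, ← he, (hχ a b).2]⟩

lemma IsCentral.of_linearEquiv {N : Type*} [AddCommGroup N] [Module R N]
    {mulN : N →ₗ[R] N →ₗ[R] N} (e : M ≃ₗ[R] N) (he : ∀ u v, e (mul u v) = mulN (e u) (e v))
    (h : IsCentral mulN) : IsCentral mul := by
  refine ⟨fun r r' hrr' => h.1 ?_, fun χ hχ => ?_⟩
  · simpa [LinearEquiv.conj_apply] using congrArg e.conj hrr'
  · obtain ⟨r, hr⟩ := h.2 _ (hχ.conj e he)
    exact ⟨r, by simpa using congrArg e.symm.conj hr⟩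

end Centroid

section HomBaseChange

variable (R S M N : Type*) [CommRing R] [CommRing S] [Algebra R S] [Module.Flat R S]
  [AddCommGroup M] [Module R M] [Module.FinitePresentation R M] [AddCommGroup N] [Module R N]

noncomputable def homBaseChangeEquiv :
    S ⊗[R] (M →ₗ[R] N) ≃ₗ[S] (S ⊗[R] M →ₗ[S] S ⊗[R] N) :=
  (Module.FinitePresentation.isBaseChange_map R M N S).equiv

variable {R S M N}

lemma homBaseChangeEquiv_tmul (s : S) (f : M →ₗ[R] N) :
    homBaseChangeEquiv R S M N (s ⊗ₜ f) = s • f.baseChange S :=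
  IsBaseChange.equiv_tmul _ _ _

lemma homBaseChangeEquiv_apply_one_tmul (x : S ⊗[R] (M →ₗ[R] N)) (m : M) :
    homBaseChangeEquiv R S M N x (1 ⊗ₜ m) = (applyₗ m).lTensor S x := by
  induction x using TensorProduct.induction_on with
  | zero => simp
  | tmul s f => simp [homBaseChangeEquiv_tmul, smul_tmul']
  | add x y hx hy => simp [hx, hy]

lemma eq_zero_of_lTensor_applyₗ_eq_zero {x : S ⊗[R] (M →ₗ[R] N)}
    (h : ∀ m, (applyₗ m).lTensor S x = 0) : x = 0 := by
  apply (homBaseChangeEquiv R S M N).injective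
  ext m
  simp [homBaseChangeEquiv_apply_one_tmul, h]

end HomBaseChange

section CentroidBaseChange

variable {R M : Type*} (S : Type*) [CommRing R] [CommRing S] [Algebra R S]
  [AddCommGroup M] [Module R M] {mul : M →ₗ[R] M →ₗ[R] M}

lemma prodRight_lTensor_centroidDefect [Module.Flat R S] [Module.FinitePresentation R M]
    (x : S ⊗[R] Module.End R M) (a b : M) :
    prodRight R S S M M ((applyₗ b ∘ₗ applyₗ a ∘ₗ centroidDefect mul).lTensor S x) =
      centroidDefect (BilinMap.baseChange S mul) (homBaseChangeEquiv R S M M x)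
        (1 ⊗ₜ a) (1 ⊗ₜ b) := by
  induction x using TensorProduct.induction_on with
  | zero => simp
  | tmul s f => simp [homBaseChangeEquiv_tmul, smul_sub, smul_tmul', tmul_sub]
  | add x y hx hy => simp only [map_add, LinearMap.add_apply, hx, hy]

lemma homBaseChangeEquiv_lTensor_toSpanSingleton_id [Module.Flat R S]
    [Module.FinitePresentation R M] (w : S ⊗[R] R) :
    homBaseChangeEquiv R S M M ((toSpanSingleton R _ LinearMap.id).lTensor S w) =
      TensorProduct.rid R S w • LinearMap.id := by
  induction w using TensorProduct.induction_on with
  | zero => simp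
  | tmul s r =>
    rw [lTensor_tmul, toSpanSingleton_apply, ← smul_tmul, homBaseChangeEquiv_tmul, rid_tmul,
      baseChange_id]
  | add x y hx hy => simp [hx, hy, add_smul]

theorem IsCentral.baseChange [Module.Flat R S] [Module.FinitePresentation R M]
    (h : IsCentral mul) : IsCentral (BilinMap.baseChange S mul) := by
  refine ⟨fun s t hst => ?_, fun χ hχ => ?_⟩
  · have hι := Module.Flat.lTensor_preserves_injective_linearMap (M := S)
      (toSpanSingleton R (Module.End R M) LinearMap.id) h.1
    apply (TensorProduct.rid R S).symm.injective
    apply hι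
    apply (homBaseChangeEquiv R S M M).injective
    simpa only [homBaseChangeEquiv_lTensor_toSpanSingleton_id, LinearEquiv.apply_symm_apply]
      using hst
  · obtain ⟨x, rfl⟩ := (homBaseChangeEquiv R S M M).surjective χ
    have hx : (centroidDefect mul).lTensor S x = 0 := by
      refine eq_zero_of_lTensor_applyₗ_eq_zero fun a => ?_
      rw [← lTensor_comp_apply]
      refine eq_zero_of_lTensor_applyₗ_eq_zero fun b => ?_
      rw [← lTensor_comp_apply, ← (prodRight R S S M M).map_eq_zero_iff,
        prodRight_lTensor_centroidDefect, centroidDefect_eq_zero_iff.mpr hχ]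
      rfl
    have hex := Module.Flat.lTensor_exact (N := R) (N' := Module.End R M)
      (N'' := M →ₗ[R] M →ₗ[R] M × M) S h.exact
    obtain ⟨w, rfl⟩ := (hex x).mp hx
    exact ⟨TensorProduct.rid R S w, homBaseChangeEquiv_lTensor_toSpanSingleton_id S w⟩

theorem IsCentral.of_baseChange [Module.FaithfullyFlat R S] [Module.FinitePresentation R M]
    (h : IsCentral (BilinMap.baseChange S mul)) : IsCentral mul := by
  refine ⟨fun r r' hrr' => FaithfulSMul.algebraMap_injective R S (h.1 ?_), fun χ hχ => ?_⟩
  · simpa [algebraMap_smul, baseChange_smul] using congrArg (LinearMap.baseChange S) hrr'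
  · obtain ⟨s, hs⟩ := h.2 _ (hχ.baseChange S)
    have h1 : (1 : S) ⊗ₜ χ = s • (1 : S) ⊗ₜ[R] LinearMap.id :=
      (homBaseChangeEquiv R S M M).injective (by simp [homBaseChangeEquiv_tmul, hs])
    have : χ ∈ R ∙ LinearMap.id := by
      rw [← Submodule.span_singleton_le_iff_mem, ← Submodule.baseChange_le_iff (A := S),
        Submodule.baseChange_span, Submodule.baseChange_span]
      simp [Submodule.span_singleton_le_iff_mem, h1, Submodule.smul_mem,
        Submodule.mem_span_singleton_self]
    obtain ⟨r, hr⟩ := Submodule.mem_span_singleton.mp this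
    exact ⟨r, hr.symm⟩

end CentroidBaseChange

/-- Let `A` be a central `k`-algebra which is finitely presented as
a `k`-module, `R` a flat commutative `k`-algebra, `S` a faithfully flat commutative
`R`-algebra, and `B` an `R`-algebra such that `B ⊗_R S ≅ A ⊗_k S` as `S`-algebras.
Then `B` is finitely presented as an `R`-module and the canonical map
`R → Cent_R(B)`, `r ↦ (b ↦ r • b)`, is an isomorphism (formalized: it is injective
and every centroidal transformation of `B` is of the form `r • id`); in particular
`B` is a central `R`-algebra.  Centrality of `A` is expressed in the same way. -/
theorem stmt_8 {k A R S B : Type*} [CommRing k]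
    [AddCommGroup A] [Module k A] [Module.FinitePresentation k A]
    [CommRing R] [Algebra k R] [Module.Flat k R]
    [CommRing S] [Algebra R S] [Algebra k S] [IsScalarTower k R S]
    [Module.FaithfullyFlat R S]
    [AddCommGroup B] [Module R B]
    (mulA : A →ₗ[k] A →ₗ[k] A)
    (hAinj : Function.Injective fun s : k => (s • LinearMap.id : A →ₗ[k] A))
    (hAsurj : ∀ χ : A →ₗ[k] A,
      (∀ a₁ a₂ : A, χ (mulA a₁ a₂) = mulA (χ a₁) a₂ ∧
        χ (mulA a₁ a₂) = mulA a₁ (χ a₂)) →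
      ∃ s : k, χ = s • LinearMap.id)
    (mulB : B →ₗ[R] B →ₗ[R] B)
    (mulAS : (S ⊗[k] A) →ₗ[S] (S ⊗[k] A) →ₗ[S] (S ⊗[k] A))
    (hmulAS : ∀ (s₁ s₂ : S) (a₁ a₂ : A),
      mulAS (s₁ ⊗ₜ a₁) (s₂ ⊗ₜ a₂) = (s₁ * s₂) ⊗ₜ (mulA a₁ a₂))
    (mulBS : (S ⊗[R] B) →ₗ[S] (S ⊗[R] B) →ₗ[S] (S ⊗[R] B))
    (hmulBS : ∀ (s₁ s₂ : S) (b₁ b₂ : B),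
      mulBS (s₁ ⊗ₜ b₁) (s₂ ⊗ₜ b₂) = (s₁ * s₂) ⊗ₜ (mulB b₁ b₂))
    (e : (S ⊗[R] B) ≃ₗ[S] (S ⊗[k] A))
    (hmul_e : ∀ u v : S ⊗[R] B, e (mulBS u v) = mulAS (e u) (e v)) :
    Module.FinitePresentation R B ∧
    Function.Injective (fun r : R => (r • LinearMap.id : B →ₗ[R] B)) ∧
    ∀ χ : B →ₗ[R] B,
      (∀ b₁ b₂ : B, χ (mulB b₁ b₂) = mulB (χ b₁) b₂ ∧
        χ (mulB b₁ b₂) = mulB b₁ (χ b₂)) →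
      ∃ r : R, χ = r • LinearMap.id := by
  have : Module.Flat k S := .trans k R S
  have : Module.FinitePresentation S (S ⊗[R] B) := .of_equiv e.symm
  have hmulAS' : mulAS = BilinMap.baseChange S mulA := by ext; simp [hmulAS]
  have hmulBS' : mulBS = BilinMap.baseChange S mulB := by ext; simp [hmulBS]
  subst hmulAS' hmulBS'
  have hB : Module.FinitePresentation R B :=
    .of_finitePresentation_tensorProduct_of_faithfullyFlat S
  have hA : IsCentral mulA := ⟨hAinj, hAsurj⟩
  exact ⟨hB, ((hA.baseChange S).of_linearEquiv e hmul_e).of_baseChange S⟩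
end

section
/- Assume the twisted-form setup: k a commutative ring, R a commutative k-algebra, S a commutative R-algebra, A a k-algebra, B an R-subalgebra of A_S = A⊗_k S, N a (B,R)-dimodule, N_S = N⊗_R S endowed with an (A_S,S)-dimodule structure compatible with the (B,R)-structure (b·(n⊗s) = (b·n)⊗s and (n⊗s)·b = (n·b)⊗s for b ∈ B, n ∈ N, s ∈ S), and π : N_S → N an R-linear map with π(b·m) = b·π(m) and π(m·b) = π(m)·b for all b ∈ B, m ∈ N_S. Then for every χ ∈ Cent_k(A_S, N_S), the restriction ρ(χ) : B → N, b ↦ π(χ(b)), lies in Cent_k(B,N); moreover ρ is an R-bimodule homomorphism on centroids: ρ(r·χ) = r·ρ(χ) and ρ(χ·r) = ρ(χ)·r for all r ∈ R, where the bimodule structures are given by (r·f)(x) = r(f(x)) and (f·r)(x) = f(rx). -/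
open TensorProduct

theorem stmt_13_general {k R S A N : Type*} [CommRing k]
    [CommRing R]
    [CommRing S] [Algebra R S] [Algebra k S]
    [AddCommGroup A] [Module k A]
    [AddCommGroup N] [Module R N]
    (mulS : (S ⊗[k] A) →ₗ[S] (S ⊗[k] A) →ₗ[S] (S ⊗[k] A))
    (B : Submodule R (S ⊗[k] A))
    (lactN : ↥B →ₗ[R] N →ₗ[R] N) (ractN : N →ₗ[R] ↥B →ₗ[R] N)
    (lactS : (S ⊗[k] A) →ₗ[S] (S ⊗[R] N) →ₗ[S] (S ⊗[R] N))
    (ractS : (S ⊗[R] N) →ₗ[S] (S ⊗[k] A) →ₗ[S] (S ⊗[R] N))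
    (π : (S ⊗[R] N) →ₗ[R] N)
    (hπL : ∀ (b : ↥B) (m : S ⊗[R] N), π (lactS (↑b) m) = lactN b (π m))
    (hπR : ∀ (b : ↥B) (m : S ⊗[R] N), π (ractS m (↑b)) = ractN (π m) b)
    (χ : (S ⊗[k] A) →ₗ[k] (S ⊗[R] N))
    (hχ : ∀ x y : S ⊗[k] A,
      χ (mulS x y) = ractS (χ x) y ∧ χ (mulS x y) = lactS x (χ y)) :
    (∀ b₁ b₂ : ↥B,
      π (χ (mulS (↑b₁) (↑b₂))) = ractN (π (χ ↑b₁)) b₂ ∧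
      π (χ (mulS (↑b₁) (↑b₂))) = lactN b₁ (π (χ ↑b₂))) ∧
    (∀ (r : R) (b : ↥B),
      π (r • χ ↑b) = r • π (χ ↑b) ∧
      π (χ (r • (↑b : S ⊗[k] A))) = π (χ ↑(r • b))) :=
  ⟨fun b₁ b₂ => ⟨by rw [(hχ _ _).1, hπR], by rw [(hχ _ _).2, hπL]⟩,
    fun r b => ⟨π.map_smul r _, rfl⟩⟩

/-- (Twisted-form setup, as in Statement 12.)  For every
centroidal transformation `χ ∈ Cent_k(A_S, N_S)` the restriction
`ρ(χ) : B → N`, `b ↦ π(χ(b))`, lies in `Cent_k(B,N)`; moreover `ρ` is an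
`R`-bimodule homomorphism on centroids: `ρ(r·χ) = r·ρ(χ)` and
`ρ(χ·r) = ρ(χ)·r`, where `(r·f)(x) = r • f(x)` and `(f·r)(x) = f(r • x)`. -/
theorem stmt_13 {k R S A N : Type*} [CommRing k]
    [CommRing R] [Algebra k R]
    [CommRing S] [Algebra R S] [Algebra k S] [IsScalarTower k R S]
    [AddCommGroup A] [Module k A]
    [AddCommGroup N] [Module R N] [Module k N] [IsScalarTower k R N]
    (mul : A →ₗ[k] A →ₗ[k] A)
    (mulS : (S ⊗[k] A) →ₗ[S] (S ⊗[k] A) →ₗ[S] (S ⊗[k] A))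
    (hmulS : ∀ (s₁ s₂ : S) (a₁ a₂ : A),
      mulS (s₁ ⊗ₜ a₁) (s₂ ⊗ₜ a₂) = (s₁ * s₂) ⊗ₜ (mul a₁ a₂))
    (B : Submodule R (S ⊗[k] A))
    (hB : ∀ x ∈ B, ∀ y ∈ B, mulS x y ∈ B)
    (lactN : ↥B →ₗ[R] N →ₗ[R] N) (ractN : N →ₗ[R] ↥B →ₗ[R] N)
    (lactS : (S ⊗[k] A) →ₗ[S] (S ⊗[R] N) →ₗ[S] (S ⊗[R] N))
    (ractS : (S ⊗[R] N) →ₗ[S] (S ⊗[k] A) →ₗ[S] (S ⊗[R] N))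
    (hcompatL : ∀ (b : ↥B) (s : S) (n : N),
      lactS (↑b) (s ⊗ₜ n) = s ⊗ₜ (lactN b n))
    (hcompatR : ∀ (b : ↥B) (s : S) (n : N),
      ractS (s ⊗ₜ n) (↑b) = s ⊗ₜ (ractN n b))
    (π : (S ⊗[R] N) →ₗ[R] N)
    (hπL : ∀ (b : ↥B) (m : S ⊗[R] N), π (lactS (↑b) m) = lactN b (π m))
    (hπR : ∀ (b : ↥B) (m : S ⊗[R] N), π (ractS m (↑b)) = ractN (π m) b)
    (χ : (S ⊗[k] A) →ₗ[k] (S ⊗[R] N))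
    (hχ : ∀ x y : S ⊗[k] A,
      χ (mulS x y) = ractS (χ x) y ∧ χ (mulS x y) = lactS x (χ y)) :
    (∀ b₁ b₂ : ↥B,
      π (χ (mulS (↑b₁) (↑b₂))) = ractN (π (χ ↑b₁)) b₂ ∧
      π (χ (mulS (↑b₁) (↑b₂))) = lactN b₁ (π (χ ↑b₂))) ∧
    (∀ (r : R) (b : ↥B),
      π (r • χ ↑b) = r • π (χ ↑b) ∧
      π (χ (r • (↑b : S ⊗[k] A))) = π (χ ↑(r • b))) :=
  stmt_13_general mulS B lactN ractN lactS ractS π hπL hπR χ hχ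
end

section
/- Assume the twisted-form setup with A perfect: k a commutative ring, R a commutative k-algebra, S a commutative R-algebra, A a perfect k-algebra, B an R-subalgebra of A_S = A⊗_k S, N a (B,R)-dimodule, N_S = N⊗_R S endowed with an (A_S,S)-dimodule structure compatible with the (B,R)-structure (b·(n⊗s) = (b·n)⊗s and (n⊗s)·b = (n·b)⊗s for b ∈ B, n ∈ N, s ∈ S), and π : N_S → N an R-linear map with π(b·m) = b·π(m) and π(m·b) = π(m)·b for all b ∈ B, m ∈ N_S. Then (1) the double restriction map ρ̃ is well-defined: for every d ∈ Der_k(S, Cent_k(A_S,N_S)), the map ρ̃(d) : R → Cent_k(B,N), r ↦ ρ(d(r)), is a derivation of R with values in Cent_k(B,N); and (2) η_{B,N} ∘ ρ ∘ σ_S = ρ̃, where σ_S(d)(a⊗s) = d(s)(a⊗1), ρ(f)(b) = π(f(b)), and (η_{B,N}(D)(r))(b) = D(rb) − r·D(b). -/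
/-!
Centroidality and the Leibniz rule descend from `A_S` to `B` because `π` is a `B`-bimodule map
and `R` acts on `S ⊗ A` through `S`. For (2), writing `s ⊗ a = s • (1 ⊗ a)`, the Leibniz rule of
`d` gives `σ_S(d)(t • x) = d(t)(x) + t • σ_S(d)(x)` on pure tensors, hence everywhere; then apply
`π` and take `t = r ∈ R`.
-/

open TensorProduct

section Leibniz

variable {k S A M : Type*} [CommRing k] [CommRing S] [Algebra k S]
  [AddCommGroup A] [Module k A] [AddCommGroup M] [Module k M] [Module S M]

theorem map_smul_eq_add_smul_of_leibniz (d : S →ₗ[k] ((S ⊗[k] A) →ₗ[k] M))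
    (hdder : ∀ (s₁ s₂ : S) (x : S ⊗[k] A), d (s₁ * s₂) x = d s₁ (s₂ • x) + s₁ • d s₂ x)
    (σd : (S ⊗[k] A) →ₗ[k] M) (hσd : ∀ (s : S) (a : A), σd (s ⊗ₜ a) = d s ((1 : S) ⊗ₜ a))
    (t : S) (x : S ⊗[k] A) :
    σd (t • x) = d t x + t • σd x := by
  induction x using TensorProduct.induction_on with
  | zero => simp
  | tmul s a =>
    have hs : s • ((1 : S) ⊗ₜ[k] a) = s ⊗ₜ a := by rw [smul_tmul', smul_eq_mul, mul_one]
    rw [smul_tmul', smul_eq_mul, hσd, hσd, hdder, hs]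
  | add x y hx hy =>
    rw [smul_add, map_add, hx, hy, map_add, map_add, smul_add]
    abel

end Leibniz

theorem stmt_14_general {k R S A N : Type*} [CommRing k]
    [CommRing R]
    [CommRing S] [Algebra R S] [Algebra k S]
    [AddCommGroup A] [Module k A]
    [AddCommGroup N] [Module R N] [Module k N]
    (mulS : (S ⊗[k] A) →ₗ[S] (S ⊗[k] A) →ₗ[S] (S ⊗[k] A))
    (B : Submodule R (S ⊗[k] A))
    (lactN : ↥B →ₗ[R] N →ₗ[R] N) (ractN : N →ₗ[R] ↥B →ₗ[R] N)
    (lactS : (S ⊗[k] A) →ₗ[S] (S ⊗[R] N) →ₗ[S] (S ⊗[R] N))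
    (ractS : (S ⊗[R] N) →ₗ[S] (S ⊗[k] A) →ₗ[S] (S ⊗[R] N))
    (π : (S ⊗[R] N) →ₗ[R] N)
    (hπL : ∀ (b : ↥B) (m : S ⊗[R] N), π (lactS (↑b) m) = lactN b (π m))
    (hπR : ∀ (b : ↥B) (m : S ⊗[R] N), π (ractS m (↑b)) = ractN (π m) b)
    (d : S →ₗ[k] ((S ⊗[k] A) →ₗ[k] (S ⊗[R] N)))
    (hdcent : ∀ (s : S) (x y : S ⊗[k] A),
      d s (mulS x y) = ractS (d s x) y ∧ d s (mulS x y) = lactS x (d s y))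
    (hdder : ∀ (s₁ s₂ : S) (x : S ⊗[k] A),
      d (s₁ * s₂) x = d s₁ (s₂ • x) + s₁ • d s₂ x)
    (σd : (S ⊗[k] A) →ₗ[k] (S ⊗[R] N))
    (hσd : ∀ (s : S) (a : A), σd (s ⊗ₜ a) = d s ((1 : S) ⊗ₜ a)) :
    (∀ (r : R) (b₁ b₂ : ↥B),
      π (d (algebraMap R S r) (mulS (↑b₁) (↑b₂))) =
          ractN (π (d (algebraMap R S r) ↑b₁)) b₂ ∧
      π (d (algebraMap R S r) (mulS (↑b₁) (↑b₂))) =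
          lactN b₁ (π (d (algebraMap R S r) ↑b₂))) ∧
    (∀ (r₁ r₂ : R) (b : ↥B),
      π (d (algebraMap R S (r₁ * r₂)) ↑b) =
        π (d (algebraMap R S r₁) ↑(r₂ • b)) + r₁ • π (d (algebraMap R S r₂) ↑b)) ∧
    (∀ (r : R) (b : ↥B),
      π (σd (r • (↑b : S ⊗[k] A))) - r • π (σd ↑b) =
        π (d (algebraMap R S r) ↑b)) := by
  refine ⟨fun r b₁ b₂ => ?_, fun r₁ r₂ b => ?_, fun r b => ?_⟩
  · obtain ⟨hright, hleft⟩ := hdcent (algebraMap R S r) b₁ b₂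
    exact ⟨by rw [hright, hπR], by rw [hleft, hπL]⟩
  · rw [map_mul, hdder, map_add, Submodule.coe_smul, algebraMap_smul, algebraMap_smul, π.map_smul]
  · rw [← algebraMap_smul S r (b : S ⊗[k] A),
      map_smul_eq_add_smul_of_leibniz d hdder σd hσd, map_add, algebraMap_smul, map_smul,
      add_sub_cancel_right]

/-- (Twisted-form setup with `A` perfect, as in Statement 12.)
Let `d ∈ Der_k(S, Cent_k(A_S, N_S))` and let `σ_S(d)` be the `k`-linear map with
`σ_S(d)(s ⊗ a) = d(s)(1 ⊗ a)`.  Then (1) the double restriction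
`ρ̃(d) : R → Cent_k(B,N)`, `r ↦ ρ(d(r)) = (b ↦ π(d(r)(b)))`, is well defined:
its values are centroidal on `B` and it satisfies the Leibniz rule
`ρ̃(d)(r₁r₂) = ρ̃(d)(r₁)·r₂ + r₁·ρ̃(d)(r₂)`; and (2) `η_{B,N} ∘ ρ ∘ σ_S = ρ̃`,
i.e. `π(σ_S(d)(r•b)) − r•π(σ_S(d)(b)) = π(d(r)(b))` for all `r ∈ R`, `b ∈ B`. -/
theorem stmt_14 {k R S A N : Type*} [CommRing k]
    [CommRing R] [Algebra k R]
    [CommRing S] [Algebra R S] [Algebra k S] [IsScalarTower k R S]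
    [AddCommGroup A] [Module k A]
    [AddCommGroup N] [Module R N] [Module k N] [IsScalarTower k R N]
    (mul : A →ₗ[k] A →ₗ[k] A)
    (hperf : Submodule.span k {x : A | ∃ a b : A, x = mul a b} = ⊤)
    (mulS : (S ⊗[k] A) →ₗ[S] (S ⊗[k] A) →ₗ[S] (S ⊗[k] A))
    (hmulS : ∀ (s₁ s₂ : S) (a₁ a₂ : A),
      mulS (s₁ ⊗ₜ a₁) (s₂ ⊗ₜ a₂) = (s₁ * s₂) ⊗ₜ (mul a₁ a₂))
    (B : Submodule R (S ⊗[k] A))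
    (hB : ∀ x ∈ B, ∀ y ∈ B, mulS x y ∈ B)
    (lactN : ↥B →ₗ[R] N →ₗ[R] N) (ractN : N →ₗ[R] ↥B →ₗ[R] N)
    (lactS : (S ⊗[k] A) →ₗ[S] (S ⊗[R] N) →ₗ[S] (S ⊗[R] N))
    (ractS : (S ⊗[R] N) →ₗ[S] (S ⊗[k] A) →ₗ[S] (S ⊗[R] N))
    (hcompatL : ∀ (b : ↥B) (s : S) (n : N),
      lactS (↑b) (s ⊗ₜ n) = s ⊗ₜ (lactN b n))
    (hcompatR : ∀ (b : ↥B) (s : S) (n : N),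
      ractS (s ⊗ₜ n) (↑b) = s ⊗ₜ (ractN n b))
    (π : (S ⊗[R] N) →ₗ[R] N)
    (hπL : ∀ (b : ↥B) (m : S ⊗[R] N), π (lactS (↑b) m) = lactN b (π m))
    (hπR : ∀ (b : ↥B) (m : S ⊗[R] N), π (ractS m (↑b)) = ractN (π m) b)
    (d : S →ₗ[k] ((S ⊗[k] A) →ₗ[k] (S ⊗[R] N)))
    (hdcent : ∀ (s : S) (x y : S ⊗[k] A),
      d s (mulS x y) = ractS (d s x) y ∧ d s (mulS x y) = lactS x (d s y))
    (hdder : ∀ (s₁ s₂ : S) (x : S ⊗[k] A),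
      d (s₁ * s₂) x = d s₁ (s₂ • x) + s₁ • d s₂ x)
    (σd : (S ⊗[k] A) →ₗ[k] (S ⊗[R] N))
    (hσd : ∀ (s : S) (a : A), σd (s ⊗ₜ a) = d s ((1 : S) ⊗ₜ a)) :
    (∀ (r : R) (b₁ b₂ : ↥B),
      π (d (algebraMap R S r) (mulS (↑b₁) (↑b₂))) =
          ractN (π (d (algebraMap R S r) ↑b₁)) b₂ ∧
      π (d (algebraMap R S r) (mulS (↑b₁) (↑b₂))) =
          lactN b₁ (π (d (algebraMap R S r) ↑b₂))) ∧
    (∀ (r₁ r₂ : R) (b : ↥B),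
      π (d (algebraMap R S (r₁ * r₂)) ↑b) =
        π (d (algebraMap R S r₁) ↑(r₂ • b)) + r₁ • π (d (algebraMap R S r₂) ↑b)) ∧
    (∀ (r : R) (b : ↥B),
      π (σd (r • (↑b : S ⊗[k] A))) - r • π (σd ↑b) =
        π (d (algebraMap R S r) ↑b)) :=
  stmt_14_general mulS B lactN ractN lactS ractS π hπL hπR d hdcent hdder σd hσd
end

section
/- Let k be a commutative ring, R a commutative k-algebra, S a commutative R-algebra which is étale (formally étale and finitely presented) and faithfully flat over R, and P an R-module. Then every k-linear derivation d : R → P extends uniquely to a k-linear derivation D : S → P⊗_R S, i.e., there is exactly one k-linear derivation D of S with values in the S-module P⊗_R S such that D(r·1_S) = d(r) ⊗ 1_S for all r ∈ R. -/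
open TensorProduct

/-!
Since `S` is formally étale over `R`, the canonical map `S ⊗[R] Ω[R⁄k] → Ω[S⁄k]` is an
isomorphism, so the extension of `d` is the base change to `S` of its Kähler lift `Ω[R⁄k] → P`.
Uniqueness: the difference of two extensions kills `R`, hence is `R`-linear and factors through
`Ω[S⁄R] = 0`.
-/

namespace Derivation

variable {k R S : Type*} [CommRing k] [CommRing R] [CommRing S] [Algebra R S] [Algebra k S]

section FormallyUnramified

variable [Algebra.FormallyUnramified R S] {M : Type*} [AddCommGroup M] [Module S M] [Module R M]
  [IsScalarTower R S M] [Module k M]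

theorem eq_zero_of_map_algebraMap_eq_zero (D : Derivation k S M)
    (hD : ∀ r : R, D (algebraMap R S r) = 0) : D = 0 := by
  let E : Derivation R S M := mk'
    { toFun := D
      map_add' := D.map_add
      map_smul' := fun r s => by
        rw [Algebra.smul_def, D.leibniz, hD, smul_zero, add_zero, algebraMap_smul]; rfl }
    D.leibniz
  ext s
  rw [zero_apply, show D s = E s from rfl, ← E.liftKaehlerDifferential_comp_D,
    Subsingleton.elim (KaehlerDifferential.D R S s) 0, map_zero]

theorem ext_of_formallyUnramified {D₁ D₂ : Derivation k S M}
    (h : ∀ r : R, D₁ (algebraMap R S r) = D₂ (algebraMap R S r)) : D₁ = D₂ :=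
  sub_eq_zero.mp <| eq_zero_of_map_algebraMap_eq_zero _ fun r => by
    rw [sub_apply, h, sub_self]

end FormallyUnramified

section FormallyEtale

variable [Algebra k R] [IsScalarTower k R S] [Algebra.FormallyEtale R S]
  {P : Type*} [AddCommGroup P] [Module R P] [Module k P] [IsScalarTower k R P]

variable (S) in
noncomputable def baseChangeOfFormallyEtale (d : Derivation k R P) : Derivation k S (S ⊗[R] P) :=
  ((d.liftKaehlerDifferential.baseChange S).comp
    (KaehlerDifferential.tensorKaehlerEquivOfFormallyEtale k R S).symm.toLinearMap).compDer
    (KaehlerDifferential.D k S)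

@[simp]
theorem baseChangeOfFormallyEtale_algebraMap (d : Derivation k R P) (r : R) :
    d.baseChangeOfFormallyEtale S (algebraMap R S r) = 1 ⊗ₜ d r := by
  simp [baseChangeOfFormallyEtale,
    KaehlerDifferential.tensorKaehlerEquivOfFormallyEtale_symm_D_algebraMap]

end FormallyEtale

end Derivation

theorem stmt_17_general {k : Type*} {R S : Type u} {P : Type*}
    [CommRing k] [CommRing R] [Algebra k R]
    [CommRing S] [Algebra R S] [Algebra k S] [IsScalarTower k R S]
    [Algebra.Etale R S]
    [AddCommGroup P] [Module R P] [Module k P] [IsScalarTower k R P]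
    (d : Derivation k R P) :
    ∃! D : Derivation k S (S ⊗[R] P),
      ∀ r : R, D (algebraMap R S r) = (1 : S) ⊗ₜ[R] (d r) :=
  ⟨d.baseChangeOfFormallyEtale S, d.baseChangeOfFormallyEtale_algebraMap,
    fun _ hD => Derivation.ext_of_formallyUnramified fun r => by
      rw [hD, d.baseChangeOfFormallyEtale_algebraMap]⟩

/-- Let `R` be a commutative `k`-algebra, `S` a commutative
`R`-algebra which is étale (formally étale and finitely presented, i.e.
`Algebra.Etale R S`) and faithfully flat over `R`, and `P` an `R`-module.  Then
every `k`-linear derivation `d : R → P` extends uniquely to a `k`-linear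
derivation `D : S → S ⊗_R P`: there is exactly one `k`-linear derivation `D` of
`S` with values in the `S`-module `S ⊗_R P` such that
`D(r·1_S) = 1 ⊗ d(r)` for all `r ∈ R`. -/
theorem stmt_17 {k : Type*} {R S : Type u} {P : Type*}
    [CommRing k] [CommRing R] [Algebra k R]
    [CommRing S] [Algebra R S] [Algebra k S] [IsScalarTower k R S]
    [Algebra.Etale R S] [Module.FaithfullyFlat R S]
    [AddCommGroup P] [Module R P] [Module k P] [IsScalarTower k R P]
    (d : Derivation k R P) :
    ∃! D : Derivation k S (S ⊗[R] P),
      ∀ r : R, D (algebraMap R S r) = (1 : S) ⊗ₜ[R] (d r) :=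
  stmt_17_general d
end
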